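/- arXiv:2009.14183 — 2 statements merged into one kernel-verified Lean document; each statement's English description precedes it below -/
import Mathlib

section
/- Let k be a field of characteristic 2 and let n ≥ 2 be an integer. For f = z^2 + x^2 y + x y^n in k[x,y,z], the Tjurina algebra k[x,y,z]/(f, ∂f/∂x, ∂f/∂y, ∂f/∂z) has k-dimension 4n. -/
open MvPolynomial

set_option synthInstance.maxHeartbeats 1000000
set_option maxHeartbeats 2000000

namespace TjurinaAux

variable (k : Type*) [Field k] (n : ℕ) (c : k)

noncomputable abbrev R1 := AdjoinRoot ((Polynomial.X : Polynomial k) ^ n)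

noncomputable def y1 : R1 k n := AdjoinRoot.root _

noncomputable def p2 : Polynomial (R1 k n) :=
  Polynomial.X ^ 2 + Polynomial.C (algebraMap k (R1 k n) c * (y1 k n) ^ (n - 1)) * Polynomial.X

noncomputable abbrev R2 := AdjoinRoot (p2 k n c)

noncomputable def x2 : R2 k n c := AdjoinRoot.root _

noncomputable abbrev R3 := AdjoinRoot ((Polynomial.X : Polynomial (R2 k n c)) ^ 2)

noncomputable def z3 : R3 k n c := AdjoinRoot.root _

theorem y1_pow : (y1 k n) ^ n = 0 := by
  rw [y1, ← AdjoinRoot.mk_X, ← map_pow, AdjoinRoot.mk_self]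

theorem z3_sq : (z3 k n c) ^ 2 = 0 := by
  rw [z3, ← AdjoinRoot.mk_X, ← map_pow, AdjoinRoot.mk_self]

theorem x2_rel : (x2 k n c) ^ 2 +
    algebraMap (R1 k n) (R2 k n c) (algebraMap k (R1 k n) c * (y1 k n) ^ (n - 1)) * x2 k n c
      = 0 := by
  have h := AdjoinRoot.eval₂_root (p2 k n c)
  rw [p2] at h
  simp only [Polynomial.eval₂_add, Polynomial.eval₂_mul, Polynomial.eval₂_pow,
    Polynomial.eval₂_C, Polynomial.eval₂_X] at h
  simp only [x2, AdjoinRoot.algebraMap_eq]; exact h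

noncomputable def xx : R3 k n c := algebraMap (R2 k n c) _ (x2 k n c)
noncomputable def yy : R3 k n c := algebraMap (R1 k n) _ (y1 k n)

theorem yy_pow : (yy k n c) ^ n = 0 := by
  rw [yy, ← map_pow, y1_pow, map_zero]

theorem xx_rel : (xx k n c) ^ 2 +
    algebraMap k (R3 k n c) c * xx k n c * (yy k n c) ^ (n - 1) = 0 := by
  have h := congrArg (algebraMap (R2 k n c) (R3 k n c)) (x2_rel k n c)
  simp only [map_add, map_pow, map_mul, map_zero,
    ← IsScalarTower.algebraMap_apply] at h
  simp only [xx, yy]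
  linear_combination h

noncomputable def J : Ideal (MvPolynomial (Fin 3) k) :=
  Ideal.span {MvPolynomial.X 2 ^ 2, MvPolynomial.X 1 ^ n,
    MvPolynomial.X 0 ^ 2 + MvPolynomial.C c * MvPolynomial.X 0 * MvPolynomial.X 1 ^ (n - 1)}

noncomputable abbrev Q := MvPolynomial (Fin 3) k ⧸ J k n c

noncomputable def xq : Q k n c := Ideal.Quotient.mk _ (MvPolynomial.X 0)
noncomputable def yq : Q k n c := Ideal.Quotient.mk _ (MvPolynomial.X 1)
noncomputable def zq : Q k n c := Ideal.Quotient.mk _ (MvPolynomial.X 2)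

theorem zq_sq : (zq k n c) ^ 2 = 0 := by
  rw [zq, ← map_pow, Ideal.Quotient.eq_zero_iff_mem, J]
  exact Ideal.subset_span (by left; rfl)

theorem yq_pow : (yq k n c) ^ n = 0 := by
  rw [yq, ← map_pow, Ideal.Quotient.eq_zero_iff_mem, J]
  exact Ideal.subset_span (by right; left; rfl)

theorem algebraMap_Q (a : k) :
    algebraMap k (Q k n c) a = Ideal.Quotient.mk (J k n c) (MvPolynomial.C a) := by
  rw [IsScalarTower.algebraMap_apply k (MvPolynomial (Fin 3) k),
    Ideal.Quotient.algebraMap_eq, MvPolynomial.algebraMap_eq]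

theorem xq_rel : (xq k n c) ^ 2 +
    algebraMap k (Q k n c) c * xq k n c * (yq k n c) ^ (n - 1) = 0 := by
  have h : Ideal.Quotient.mk (J k n c) (MvPolynomial.X 0 ^ 2 +
      MvPolynomial.C c * MvPolynomial.X 0 * MvPolynomial.X 1 ^ (n - 1)) = 0 := by
    rw [Ideal.Quotient.eq_zero_iff_mem, J]
    exact Ideal.subset_span (by right; right; rfl)
  rw [map_add, map_mul, map_mul, map_pow, map_pow] at h
  rw [xq, yq, algebraMap_Q]
  exact h

noncomputable def φ0 : MvPolynomial (Fin 3) k →ₐ[k] R3 k n c :=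
  MvPolynomial.aeval ![xx k n c, yy k n c, z3 k n c]

theorem φ0_C (a : k) : φ0 k n c (MvPolynomial.C a) = algebraMap k (R3 k n c) a := by
  simp [φ0]

theorem φ0_X0 : φ0 k n c (MvPolynomial.X 0) = xx k n c := by simp [φ0]
theorem φ0_X1 : φ0 k n c (MvPolynomial.X 1) = yy k n c := by simp [φ0]
theorem φ0_X2 : φ0 k n c (MvPolynomial.X 2) = z3 k n c := by simp [φ0]

theorem φ0_vanish : ∀ a ∈ J k n c, φ0 k n c a = 0 := by
  have hle : J k n c ≤ RingHom.ker (φ0 k n c).toRingHom := by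
    rw [J, Ideal.span_le]
    rintro p (rfl | rfl | rfl) <;> rw [SetLike.mem_coe, RingHom.mem_ker]
    · rw [AlgHom.toRingHom_eq_coe, RingHom.coe_coe, map_pow, φ0_X2, z3_sq]
    · rw [AlgHom.toRingHom_eq_coe, RingHom.coe_coe, map_pow, φ0_X1, yy_pow]
    · rw [AlgHom.toRingHom_eq_coe, RingHom.coe_coe, map_add, map_pow, map_mul, map_mul,
        map_pow, φ0_X0, φ0_X1, φ0_C k n c c]
      exact xx_rel k n c
  exact fun a ha => hle ha

noncomputable def φbar : Q k n c →ₐ[k] R3 k n c :=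
  Ideal.Quotient.liftₐ (J k n c) (φ0 k n c) (φ0_vanish k n c)

theorem φbar_mk (p : MvPolynomial (Fin 3) k) :
    φbar k n c (Ideal.Quotient.mk _ p) = φ0 k n c p := by
  rw [φbar, Ideal.Quotient.liftₐ_apply]
  rfl

noncomputable def ψ1 : R1 k n →ₐ[k] Q k n c :=
  AdjoinRoot.liftAlgHom _ (Algebra.ofId _ _) (yq k n c) (by
    show Polynomial.aeval (yq k n c) _ = 0
    rw [map_pow, Polynomial.aeval_X]
    exact yq_pow k n c)

theorem ψ1_root : ψ1 k n c (y1 k n) = yq k n c := by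
  rw [ψ1, y1]; apply AdjoinRoot.liftAlgHom_root

theorem ψ1_algebraMap (a : k) : ψ1 k n c (algebraMap k (R1 k n) a) = algebraMap k (Q k n c) a :=
  (ψ1 k n c).commutes a

noncomputable def ψ2 : R2 k n c →+* Q k n c :=
  AdjoinRoot.lift (ψ1 k n c).toRingHom (xq k n c) (by
    rw [p2]
    simp only [Polynomial.eval₂_add, Polynomial.eval₂_mul, Polynomial.eval₂_pow,
      Polynomial.eval₂_C, Polynomial.eval₂_X, AlgHom.toRingHom_eq_coe, RingHom.coe_coe,
      map_mul, map_pow, ψ1_root, ψ1_algebraMap]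
    linear_combination xq_rel k n c)

theorem ψ2_root : ψ2 k n c (x2 k n c) = xq k n c := AdjoinRoot.lift_root _

theorem ψ2_of (a : R1 k n) : ψ2 k n c (algebraMap (R1 k n) (R2 k n c) a) = ψ1 k n c a := by
  rw [AdjoinRoot.algebraMap_eq]
  exact AdjoinRoot.lift_of _

noncomputable def ψ3 : R3 k n c →+* Q k n c :=
  AdjoinRoot.lift (ψ2 k n c) (zq k n c) (by
    simp only [Polynomial.eval₂_pow, Polynomial.eval₂_X]
    exact zq_sq k n c)

theorem ψ3_root : ψ3 k n c (z3 k n c) = zq k n c := AdjoinRoot.lift_root _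

theorem ψ3_of (a : R2 k n c) : ψ3 k n c (algebraMap (R2 k n c) (R3 k n c) a) = ψ2 k n c a := by
  rw [AdjoinRoot.algebraMap_eq]
  exact AdjoinRoot.lift_of _

theorem ψ3_xx : ψ3 k n c (xx k n c) = xq k n c := by
  rw [xx, ψ3_of, ψ2_root]

theorem ψ3_yy : ψ3 k n c (yy k n c) = yq k n c := by
  rw [yy, IsScalarTower.algebraMap_apply (R1 k n) (R2 k n c) (R3 k n c), ψ3_of, ψ2_of, ψ1_root]

theorem ψ3_algebraMap (a : k) : ψ3 k n c (algebraMap k (R3 k n c) a) = algebraMap k (Q k n c) a := by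
  rw [IsScalarTower.algebraMap_apply k (R2 k n c) (R3 k n c),
    IsScalarTower.algebraMap_apply k (R1 k n) (R2 k n c), ψ3_of, ψ2_of, ψ1_algebraMap]

theorem left_inv : ∀ q : Q k n c, ψ3 k n c (φbar k n c q) = q := by
  intro q
  obtain ⟨p, rfl⟩ := Ideal.Quotient.mk_surjective q
  rw [φbar_mk]
  induction p using MvPolynomial.induction_on with
  | C a =>
    rw [φ0_C, ψ3_algebraMap, algebraMap_Q]
  | add p q hp hq =>
    rw [map_add, map_add, hp, hq, map_add]
  | mul_X p i hp =>
    rw [map_mul, map_mul, hp, map_mul]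
    congr 1
    fin_cases i
    · simp only [Fin.isValue, Fin.mk_one]
      rw [show ((⟨0, by omega⟩ : Fin 3)) = (0 : Fin 3) from rfl, φ0_X0, ψ3_xx]; rfl
    · rw [show ((⟨1, by omega⟩ : Fin 3)) = (1 : Fin 3) from rfl, φ0_X1, ψ3_yy]; rfl
    · rw [show ((⟨2, by omega⟩ : Fin 3)) = (2 : Fin 3) from rfl, φ0_X2, ψ3_root]; rfl

theorem p2_eq : p2 k n c = Polynomial.X *
    (Polynomial.X + Polynomial.C (algebraMap k (R1 k n) c * (y1 k n) ^ (n - 1))) := by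
  rw [p2]; ring

theorem p2_monic : (p2 k n c).Monic := by
  rw [p2_eq]
  exact Polynomial.monic_X.mul (Polynomial.monic_X_add_C _)

theorem nontrivial_R1 (hn : 1 ≤ n) : Nontrivial (R1 k n) :=
  AdjoinRoot.nontrivial _ (by
    rw [Polynomial.degree_X_pow]
    exact_mod_cast Nat.pos_iff_ne_zero.mp hn
    )

theorem p2_natDegree (hn : 1 ≤ n) : (p2 k n c).natDegree = 2 := by
  haveI := nontrivial_R1 k n hn
  rw [p2_eq, (Polynomial.monic_X (R := R1 k n)).natDegree_mul (Polynomial.monic_X_add_C _),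
    Polynomial.natDegree_X, Polynomial.natDegree_X_add_C]


noncomputable def pb1 : PowerBasis k (R1 k n) := AdjoinRoot.powerBasis' (Polynomial.monic_X_pow n)

noncomputable def pb2 : PowerBasis (R1 k n) (R2 k n c) := AdjoinRoot.powerBasis' (p2_monic k n c)

noncomputable def pb3 : PowerBasis (R2 k n c) (R3 k n c) :=
  AdjoinRoot.powerBasis' (Polynomial.monic_X_pow 2)

theorem pb1_dim : (pb1 k n).dim = n := by
  simp [pb1]

theorem pb2_dim (hn : 1 ≤ n) : (pb2 k n c).dim = 2 := by
  simp [pb2, p2_natDegree k n c hn]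

theorem nontrivial_R2 (hn : 1 ≤ n) : Nontrivial (R2 k n c) := by
  haveI := nontrivial_R1 k n hn
  have h : Nonempty (Fin (pb2 k n c).dim) := by rw [pb2_dim k n c hn]; exact ⟨0, by omega⟩
  exact (pb2 k n c).basis.repr.toEquiv.nontrivial

theorem pb3_dim (hn : 1 ≤ n) : (pb3 k n c).dim = 2 := by
  haveI := nontrivial_R2 k n c hn
  simp [pb3]

theorem finrank_R3 (hn : 1 ≤ n) : Module.finrank k (R3 k n c) = 4 * n := by
  haveI := nontrivial_R1 k n hn
  let B : Module.Basis (Fin (pb1 k n).dim × Fin (pb2 k n c).dim × Fin (pb3 k n c).dim) k (R3 k n c) :=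
    (pb1 k n).basis.smulTower (((pb2 k n c).basis).smulTower ((pb3 k n c).basis))
  rw [Module.finrank_eq_card_basis B]
  simp [pb1_dim, pb2_dim k n c hn, pb3_dim k n c hn]
  ring


theorem range_top : ∀ t : R3 k n c, t ∈ (φbar k n c).range := by
  have hxx : xx k n c ∈ (φbar k n c).range :=
    ⟨Ideal.Quotient.mk _ (MvPolynomial.X 0), by show φbar k n c _ = _; rw [φbar_mk, φ0_X0]⟩
  have hyy : yy k n c ∈ (φbar k n c).range :=
    ⟨Ideal.Quotient.mk _ (MvPolynomial.X 1), by show φbar k n c _ = _; rw [φbar_mk, φ0_X1]⟩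
  have hzz : z3 k n c ∈ (φbar k n c).range :=
    ⟨Ideal.Quotient.mk _ (MvPolynomial.X 2), by show φbar k n c _ = _; rw [φbar_mk, φ0_X2]⟩
  have step1 : ∀ a : R1 k n, algebraMap (R1 k n) (R3 k n c) a ∈ (φbar k n c).range := by
    intro a
    induction a using AdjoinRoot.induction_on with
    | ih p =>
      rw [← AdjoinRoot.aeval_eq]
      have h := Polynomial.aeval_algHom_apply
        (IsScalarTower.toAlgHom k (R1 k n) (R3 k n c)) (AdjoinRoot.root _) p
      rw [IsScalarTower.coe_toAlgHom'] at h
      rw [← h]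
      clear h
      induction p using Polynomial.induction_on' with
      | add p q hp hq => rw [map_add]; exact add_mem hp hq
      | monomial i a =>
        rw [Polynomial.aeval_monomial]
        exact mul_mem ((φbar k n c).range.algebraMap_mem a) (pow_mem hyy i)
  have step2 : ∀ a : R2 k n c, algebraMap (R2 k n c) (R3 k n c) a ∈ (φbar k n c).range := by
    intro a
    induction a using AdjoinRoot.induction_on with
    | ih p =>
      rw [← AdjoinRoot.aeval_eq]
      have h := Polynomial.aeval_algHom_apply
        (IsScalarTower.toAlgHom (R1 k n) (R2 k n c) (R3 k n c)) (AdjoinRoot.root _) p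
      rw [IsScalarTower.coe_toAlgHom'] at h
      rw [← h]
      clear h
      induction p using Polynomial.induction_on' with
      | add p q hp hq => rw [map_add]; exact add_mem hp hq
      | monomial i a =>
        rw [Polynomial.aeval_monomial]
        exact mul_mem (step1 a) (pow_mem hxx i)
  intro t
  induction t using AdjoinRoot.induction_on with
  | ih p =>
    rw [← AdjoinRoot.aeval_eq]
    induction p using Polynomial.induction_on' with
    | add p q hp hq => rw [map_add]; exact add_mem hp hq
    | monomial i a =>
      rw [Polynomial.aeval_monomial]
      exact mul_mem (step2 a) (pow_mem hzz i)

noncomputable def equivQR3 : Q k n c ≃ₐ[k] R3 k n c :=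
  AlgEquiv.ofBijective (φbar k n c)
    ⟨Function.LeftInverse.injective (left_inv k n c),
     fun t => (range_top k n c t).imp fun _ h => h⟩

theorem dim_Q (hn : 1 ≤ n) : Module.finrank k (Q k n c) = 4 * n := by
  rw [(equivQR3 k n c).toLinearEquiv.finrank_eq, finrank_R3 k n c hn]

end TjurinaAux


set_option maxHeartbeats 1000000 in
/-- In characteristic 2, the Tjurina algebra of `z^2 + x^2 y + x y^n` (the rational double
point `D_{2n}^0`, `n ≥ 2`) has dimension `4n`. Variables: `X 0 = x`, `X 1 = y`, `X 2 = z`. -/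
theorem tjurina_D2n_0_char2 (k : Type*) [Field k] [CharP k 2]
    (n : ℕ) (hn : 2 ≤ n)
    (f : MvPolynomial (Fin 3) k)
    (hf : f = X 2 ^ 2 + X 0 ^ 2 * X 1 + X 0 * X 1 ^ n) :
    Module.finrank k
      (MvPolynomial (Fin 3) k ⧸
        (Ideal.span {f, pderiv 0 f, pderiv 1 f, pderiv 2 f} :
          Ideal (MvPolynomial (Fin 3) k))) = 4 * n := by
  have hIJ : (Ideal.span {f, pderiv 0 f, pderiv 1 f, pderiv 2 f} :
      Ideal (MvPolynomial (Fin 3) k)) =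
      Ideal.span {X 2 ^ 2, X 1 ^ n, X 0 ^ 2 + C ((n:k)) * X 0 * X 1 ^ (n-1)} := by
      obtain ⟨m, rfl⟩ : ∃ m, n = m + 2 := ⟨n - 2, by omega⟩
      have h22 : (2 : MvPolynomial (Fin 3) k) = 0 := CharTwo.two_eq_zero
      have h2 : (C (2:k) : MvPolynomial (Fin 3) k) = 0 := by
        rw [show (C (2:k) : MvPolynomial (Fin 3) k) = 2 from map_ofNat _ 2]; exact h22
      have hg0 : pderiv 0 f = X 1 ^ (m+2) := by
        rw [hf]; simp [pderiv_X_self, pderiv_X_of_ne, pderiv_pow, h22]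
      have hg1 : pderiv 1 f = X 0^2 + C (((m+2:ℕ):k)) * X 0 * X 1 ^ (m+1) := by
        rw [hf]; simp [pderiv_X_self, pderiv_X_of_ne, pderiv_pow, h2, h22]
        ring
      have hg2 : pderiv 2 f = 0 := by
        rw [hf]; simp [pderiv_X_self, pderiv_X_of_ne, pderiv_pow, h22]
      have hkey : f = X 2 ^ 2 + X 1 * (X 0^2 + C (((m+2:ℕ):k)) * X 0 * X 1 ^ (m+1))
          + (1 + C (((m+2:ℕ):k))) * X 0 * X 1 ^ (m+2) := by
        rw [hf]
        linear_combination (-(C (((m+2:ℕ):k))) * X 0 * X 1^(m+2)) * h22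
      simp only [show m+2-1 = m+1 from rfl]
      apply le_antisymm <;> rw [Ideal.span_le] <;> intro p hp
      · simp only [Set.mem_insert_iff, Set.mem_singleton_iff] at hp
        rcases hp with rfl | rfl | rfl | rfl
        · rw [hkey]
          refine add_mem (add_mem ?_ ?_) ?_
          · exact Ideal.subset_span (by left; rfl)
          · exact Ideal.mul_mem_left _ _ (Ideal.subset_span (by right; right; rfl))
          · exact Ideal.mul_mem_left _ _ (Ideal.subset_span (by right; left; rfl))
        · rw [hg0]; exact Ideal.subset_span (by right; left; rfl)
        · rw [hg1]; exact Ideal.subset_span (by right; right; rfl)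
        · rw [hg2]; exact zero_mem _
      · simp only [Set.mem_insert_iff, Set.mem_singleton_iff] at hp
        have hf' : f ∈ Ideal.span {f, pderiv 0 f, pderiv 1 f, pderiv 2 f} :=
          Ideal.subset_span (by left; rfl)
        have h0' : pderiv 0 f ∈ Ideal.span {f, pderiv 0 f, pderiv 1 f, pderiv 2 f} :=
          Ideal.subset_span (by right; left; rfl)
        have h1' : pderiv 1 f ∈ Ideal.span {f, pderiv 0 f, pderiv 1 f, pderiv 2 f} :=
          Ideal.subset_span (by right; right; left; rfl)
        rcases hp with rfl | rfl | rfl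
        · have : (X 2^2 : MvPolynomial (Fin 3) k) = f + X 1 * (pderiv 1 f)
              + (1 + C (((m+2:ℕ):k))) * X 0 * (pderiv 0 f) := by
            rw [hg0, hg1, hkey]
            linear_combination (-(X 1 * X 0^2 + X 1^(m+2) * X 0
              + 2 * X 1^(m+2) * X 0 * C (((m+2:ℕ):k)))) * h22
          rw [this]
          exact add_mem (add_mem hf' (Ideal.mul_mem_left _ _ h1')) (Ideal.mul_mem_left _ _ h0')
        · rw [← hg0]; exact h0'
        · rw [← hg1]; exact h1'
  rw [hIJ]
  exact TjurinaAux.dim_Q k n ((n:k)) (by omega)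
end

section
/- Let k be a field of characteristic 2 and let n ≥ 2 be an integer. For f = z^2 + x^2 y + y^n z in k[x,y,z], the Tjurina algebra k[x,y,z]/(f, ∂f/∂x, ∂f/∂y, ∂f/∂z) has k-dimension 4n. -/
open Polynomial AdjoinRoot

noncomputable section TjurinaAux

variable (k : Type*) [Field k] (n : ℕ)

abbrev TjB0 : Type _ := AdjoinRoot (X ^ n : k[X])
abbrev TjB1 : Type _ := AdjoinRoot (X ^ 2 : (TjB0 k n)[X])
def tjU : TjB1 k n :=
  (n : TjB1 k n) * (algebraMap (TjB0 k n) (TjB1 k n) (root _)) ^ (n-1) * root _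
abbrev TjB2 : Type _ := AdjoinRoot (X ^ 2 + C (tjU k n))

lemma tjU_def : tjU k n
    = (n : TjB1 k n) * (algebraMap (TjB0 k n) (TjB1 k n) (root _)) ^ (n-1) * root _ := rfl

lemma tjAuxNontrivial {R : Type*} [CommRing R] [Nontrivial R] {g : R[X]} (hg : g.Monic)
    (h0 : 0 < g.natDegree) : Nontrivial (AdjoinRoot g) := by
  haveI : Nonempty (Fin (AdjoinRoot.powerBasis' hg).dim) := by
    rw [AdjoinRoot.powerBasis'_dim]; exact ⟨⟨0, h0⟩⟩
  exact (AdjoinRoot.powerBasis' hg).basis.repr.toEquiv.nontrivial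

lemma tjAuxFinrank {R : Type*} [CommRing R] [Nontrivial R] [StrongRankCondition R] {g : R[X]}
    (hg : g.Monic) : Module.finrank R (AdjoinRoot g) = g.natDegree := by
  rw [Module.finrank_eq_card_basis (AdjoinRoot.powerBasis' hg).basis,
    AdjoinRoot.powerBasis'_dim, Fintype.card_fin]

lemma tjMonic1 : (X ^ 2 : (TjB0 k n)[X]).Monic := monic_X_pow 2
lemma tjMonic2 : (X ^ 2 + C (tjU k n)).Monic := monic_X_pow_add_C _ (by norm_num)

lemma finrank_TjB2 (hn : 2 ≤ n) : Module.finrank k (TjB2 k n) = 4 * n := by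
  have m0 : (X ^ n : k[X]).Monic := monic_X_pow n
  haveI h0 : Nontrivial (TjB0 k n) := tjAuxNontrivial m0 (by simp; omega)
  haveI h1 : Nontrivial (TjB1 k n) := tjAuxNontrivial (tjMonic1 k n) (by simp)
  haveI h2 : Nontrivial (TjB2 k n) :=
    tjAuxNontrivial (tjMonic2 k n) (by simp [natDegree_X_pow_add_C])
  haveI f0 : Module.Free k (TjB0 k n) := Module.Free.of_basis (AdjoinRoot.powerBasis' m0).basis
  haveI f1 : Module.Free (TjB0 k n) (TjB1 k n) :=
    Module.Free.of_basis (AdjoinRoot.powerBasis' (tjMonic1 k n)).basis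
  haveI f2 : Module.Free (TjB1 k n) (TjB2 k n) :=
    Module.Free.of_basis (AdjoinRoot.powerBasis' (tjMonic2 k n)).basis
  haveI f01 : Module.Free k (TjB1 k n) := Module.Free.of_basis
    ((AdjoinRoot.powerBasis' m0).basis.smulTower (AdjoinRoot.powerBasis' (tjMonic1 k n)).basis)
  rw [← Module.finrank_mul_finrank k (TjB1 k n) (TjB2 k n),
    ← Module.finrank_mul_finrank k (TjB0 k n) (TjB1 k n),
    tjAuxFinrank m0, tjAuxFinrank (tjMonic1 k n), tjAuxFinrank (tjMonic2 k n),
    natDegree_X_pow, natDegree_X_pow, natDegree_X_pow_add_C]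
  ring

set_option maxHeartbeats 1000000 in
set_option synthInstance.maxHeartbeats 200000 in
lemma tjurina_aux {k : Type*} [Field k] (n : ℕ)
    (I : Ideal (MvPolynomial (Fin 3) k))
    (hI : I = Ideal.span {MvPolynomial.X 2 ^ 2,
      MvPolynomial.X 0 ^ 2
        + (n : MvPolynomial (Fin 3) k) * MvPolynomial.X 1 ^ (n-1) * MvPolynomial.X 2,
      MvPolynomial.X 1 ^ n}) :
    Nonempty ((MvPolynomial (Fin 3) k ⧸ I) ≃ₐ[k] TjB2 k n) := by
  set G : MvPolynomial (Fin 3) k := MvPolynomial.X 0 ^ 2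
      + (n : MvPolynomial (Fin 3) k) * MvPolynomial.X 1 ^ (n-1) * MvPolynomial.X 2 with hGdef
  have hmz : MvPolynomial.X 2 ^ 2 ∈ I := hI ▸ Ideal.subset_span (by simp)
  have hmG : G ∈ I := hI ▸ Ideal.subset_span (by simp)
  have hmy : MvPolynomial.X 1 ^ n ∈ I := hI ▸ Ideal.subset_span (by simp)
  -- the forward map
  let v : Fin 3 → TjB2 k n := ![root _, algebraMap (TjB0 k n) (TjB2 k n) (root _),
    algebraMap (TjB1 k n) (TjB2 k n) (root _)]
  let φ : MvPolynomial (Fin 3) k →ₐ[k] TjB2 k n := MvPolynomial.aeval v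
  have hφ0 : φ (MvPolynomial.X 0) = root (X ^ 2 + C (tjU k n)) := by simp [φ, v]
  have hφ1 : φ (MvPolynomial.X 1) = algebraMap (TjB0 k n) (TjB2 k n) (root _) := by
    simp [φ, v]
  have hφ2 : φ (MvPolynomial.X 2) = algebraMap (TjB1 k n) (TjB2 k n) (root _) := by
    simp [φ, v]
  -- root relations
  have hy0 : (root (X ^ n : k[X])) ^ n = 0 := by
    rw [← AdjoinRoot.mk_X, ← map_pow, AdjoinRoot.mk_self]
  have hz1 : (root (X ^ 2 : (TjB0 k n)[X])) ^ 2 = 0 := by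
    rw [← AdjoinRoot.mk_X, ← map_pow, AdjoinRoot.mk_self]
  have hx2 : (root (X ^ 2 + C (tjU k n))) ^ 2
      + algebraMap (TjB1 k n) (TjB2 k n) (tjU k n) = 0 := by
    have h : (Polynomial.aeval (root (X ^ 2 + C (tjU k n)))) (X ^ 2 + C (tjU k n)) = 0 := by
      rw [AdjoinRoot.aeval_eq, AdjoinRoot.mk_self]
    rw [map_add, map_pow, Polynomial.aeval_X, Polynomial.aeval_C] at h
    exact h
  have hUmap : algebraMap (TjB1 k n) (TjB2 k n) (tjU k n)
      = (n : TjB2 k n) * (algebraMap (TjB0 k n) (TjB2 k n) (root _)) ^ (n-1)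
        * algebraMap (TjB1 k n) (TjB2 k n) (root _) := by
    have h := congrArg (algebraMap (TjB1 k n) (TjB2 k n)) (tjU_def k n)
    rw [map_mul, map_mul, map_pow, map_natCast] at h
    rw [h, ← IsScalarTower.algebraMap_apply]
  -- φ kills the generators
  have hφz : φ (MvPolynomial.X 2 ^ 2) = 0 := by
    rw [map_pow, hφ2, ← map_pow, hz1, map_zero]
  have hφy : φ (MvPolynomial.X 1 ^ n) = 0 := by
    rw [map_pow, hφ1, ← map_pow, hy0, map_zero]
  have hφG : φ G = 0 := by
    rw [hGdef, map_add, map_mul, map_mul, map_pow, map_pow, map_natCast, hφ0, hφ1, hφ2,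
      ← hUmap]
    linear_combination hx2
  have hker : ∀ a ∈ I, φ a = 0 := by
    have hsub : I ≤ RingHom.ker φ.toRingHom := by
      rw [hI, Ideal.span_le]
      rintro p hp
      simp only [Set.mem_insert_iff, Set.mem_singleton_iff] at hp
      rcases hp with rfl | rfl | rfl
      · exact hφz
      · exact hφG
      · exact hφy
    exact fun a ha => hsub ha
  let ψ : (MvPolynomial (Fin 3) k ⧸ I) →ₐ[k] TjB2 k n := Ideal.Quotient.liftₐ I φ hker
  have hψmk : ∀ p, ψ (Ideal.Quotient.mk I p) = φ p := fun p =>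
    Ideal.Quotient.liftₐ_apply I φ hker p
  have hψmk' : ∀ p, ψ.toRingHom (Ideal.Quotient.mk I p) = φ p := hψmk
  -- the reverse maps
  have h0 : Polynomial.eval₂ (algebraMap k (MvPolynomial (Fin 3) k ⧸ I))
      (Ideal.Quotient.mk I (MvPolynomial.X 1)) (X ^ n : k[X]) = 0 := by
    rw [eval₂_X_pow, ← map_pow, Ideal.Quotient.eq_zero_iff_mem]
    exact hmy
  let χ0 : TjB0 k n →+* MvPolynomial (Fin 3) k ⧸ I :=
    AdjoinRoot.lift (algebraMap k _) (Ideal.Quotient.mk I (MvPolynomial.X 1)) h0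
  have h1 : Polynomial.eval₂ χ0 (Ideal.Quotient.mk I (MvPolynomial.X 2))
      (X ^ 2 : (TjB0 k n)[X]) = 0 := by
    rw [eval₂_X_pow, ← map_pow, Ideal.Quotient.eq_zero_iff_mem]
    exact hmz
  let χ1 : TjB1 k n →+* MvPolynomial (Fin 3) k ⧸ I :=
    AdjoinRoot.lift χ0 (Ideal.Quotient.mk I (MvPolynomial.X 2)) h1
  have hχ1U : χ1 (tjU k n) = Ideal.Quotient.mk I
      ((n : MvPolynomial (Fin 3) k) * MvPolynomial.X 1 ^ (n-1) * MvPolynomial.X 2) := by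
    rw [tjU_def, map_mul, map_mul, map_pow, map_natCast, AdjoinRoot.algebraMap_eq,
      AdjoinRoot.lift_of, AdjoinRoot.lift_root, AdjoinRoot.lift_root,
      map_mul, map_mul, map_pow, map_natCast]
  have h2 : Polynomial.eval₂ χ1 (Ideal.Quotient.mk I (MvPolynomial.X 0))
      (X ^ 2 + C (tjU k n)) = 0 := by
    rw [eval₂_add, eval₂_X_pow, eval₂_C, hχ1U, ← map_pow, ← map_add,
      Ideal.Quotient.eq_zero_iff_mem]
    exact hmG
  let χ2 : TjB2 k n →+* MvPolynomial (Fin 3) k ⧸ I :=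
    AdjoinRoot.lift χ1 (Ideal.Quotient.mk I (MvPolynomial.X 0)) h2
  -- ψ is a left inverse of the χ tower
  have E0 : ψ.toRingHom.comp χ0 = algebraMap (TjB0 k n) (TjB2 k n) := by
    refine (RingHom.cancel_right AdjoinRoot.mk_surjective).mp ?_
    apply Polynomial.ringHom_ext'
    · show ψ.toRingHom.comp (χ0.comp (AdjoinRoot.of _))
        = (algebraMap (TjB0 k n) (TjB2 k n)).comp (AdjoinRoot.of _)
      rw [AdjoinRoot.lift_comp_of, ← AdjoinRoot.algebraMap_eq,
        ← IsScalarTower.algebraMap_eq]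
      exact AlgHom.comp_algebraMap ψ
    · show ψ (χ0 (AdjoinRoot.mk _ X)) = algebraMap (TjB0 k n) (TjB2 k n) (AdjoinRoot.mk _ X)
      rw [AdjoinRoot.mk_X, AdjoinRoot.lift_root, hψmk, hφ1]
  have E1 : ψ.toRingHom.comp χ1 = algebraMap (TjB1 k n) (TjB2 k n) := by
    refine (RingHom.cancel_right AdjoinRoot.mk_surjective).mp ?_
    apply Polynomial.ringHom_ext'
    · show ψ.toRingHom.comp (χ1.comp (AdjoinRoot.of _))
        = (algebraMap (TjB1 k n) (TjB2 k n)).comp (AdjoinRoot.of _)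
      rw [AdjoinRoot.lift_comp_of, E0, ← AdjoinRoot.algebraMap_eq,
        ← IsScalarTower.algebraMap_eq]
    · show ψ (χ1 (AdjoinRoot.mk _ X)) = algebraMap (TjB1 k n) (TjB2 k n) (AdjoinRoot.mk _ X)
      rw [AdjoinRoot.mk_X, AdjoinRoot.lift_root, hψmk, hφ2]
  have E2 : ψ.toRingHom.comp χ2 = RingHom.id (TjB2 k n) := by
    refine (RingHom.cancel_right AdjoinRoot.mk_surjective).mp ?_
    apply Polynomial.ringHom_ext'
    · show ψ.toRingHom.comp (χ2.comp (AdjoinRoot.of _))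
        = (RingHom.id (TjB2 k n)).comp (AdjoinRoot.of _)
      rw [AdjoinRoot.lift_comp_of, E1, ← AdjoinRoot.algebraMap_eq, RingHom.id_comp]
    · show ψ (χ2 (AdjoinRoot.mk _ X)) = RingHom.id _ (AdjoinRoot.mk _ X)
      rw [AdjoinRoot.mk_X, AdjoinRoot.lift_root, hψmk, hφ0, RingHom.id_apply]
  have E3 : (χ2.comp ψ.toRingHom).comp (Ideal.Quotient.mk I)
      = (RingHom.id _).comp (Ideal.Quotient.mk I) := by
    apply MvPolynomial.ringHom_ext
    · intro r
      simp only [RingHom.coe_comp, Function.comp_apply, RingHom.id_apply]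
      rw [hψmk', ← MvPolynomial.algebraMap_eq, AlgHom.commutes, AdjoinRoot.algebraMap_eq', RingHom.comp_apply,
        AdjoinRoot.lift_of, AdjoinRoot.algebraMap_eq', RingHom.comp_apply,
        AdjoinRoot.lift_of, AdjoinRoot.algebraMap_eq, AdjoinRoot.lift_of,
        IsScalarTower.algebraMap_apply k (MvPolynomial (Fin 3) k)
          (MvPolynomial (Fin 3) k ⧸ I), Ideal.Quotient.algebraMap_eq]
    · intro i
      simp only [RingHom.coe_comp, Function.comp_apply, RingHom.id_apply]
      rw [hψmk']
      fin_cases i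
      · show χ2 (φ (MvPolynomial.X 0)) = Ideal.Quotient.mk I (MvPolynomial.X 0)
        rw [hφ0]
        exact AdjoinRoot.lift_root _
      · show χ2 (φ (MvPolynomial.X 1)) = Ideal.Quotient.mk I (MvPolynomial.X 1)
        rw [hφ1, IsScalarTower.algebraMap_apply (TjB0 k n) (TjB1 k n) (TjB2 k n),
          AdjoinRoot.algebraMap_eq, AdjoinRoot.algebraMap_eq,
          AdjoinRoot.lift_of, AdjoinRoot.lift_of]
        exact AdjoinRoot.lift_root _
      · show χ2 (φ (MvPolynomial.X 2)) = Ideal.Quotient.mk I (MvPolynomial.X 2)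
        rw [hφ2, AdjoinRoot.algebraMap_eq, AdjoinRoot.lift_of]
        exact AdjoinRoot.lift_root _
  have Efull : χ2.comp ψ.toRingHom = RingHom.id _ :=
    (RingHom.cancel_right Ideal.Quotient.mk_surjective).mp E3
  refine ⟨AlgEquiv.ofBijective ψ ⟨?_, ?_⟩⟩
  · intro a b hab
    have ha := RingHom.congr_fun Efull a
    have hb := RingHom.congr_fun Efull b
    simp only [RingHom.coe_comp, Function.comp_apply, RingHom.id_apply] at ha hb
    rw [← ha, ← hb]
    exact congrArg χ2 hab
  · intro b
    refine ⟨χ2 b, ?_⟩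
    have := RingHom.congr_fun E2 b
    simpa using this

end TjurinaAux

open MvPolynomial

/-- In characteristic 2, the Tjurina algebra of `z^2 + x^2 y + y^n z` (the rational double
point `D_{2n+1}^0`, `n ≥ 2`) has dimension `4n`. Variables: `X 0 = x`, `X 1 = y`, `X 2 = z`. -/
theorem tjurina_D2n1_0_char2 (k : Type*) [Field k] [CharP k 2]
    (n : ℕ) (hn : 2 ≤ n)
    (f : MvPolynomial (Fin 3) k)
    (hf : f = X 2 ^ 2 + X 0 ^ 2 * X 1 + X 1 ^ n * X 2) :
    Module.finrank k
      (MvPolynomial (Fin 3) k ⧸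
        (Ideal.span {f, pderiv 0 f, pderiv 1 f, pderiv 2 f} :
          Ideal (MvPolynomial (Fin 3) k))) = 4 * n := by
  have hspan : (Ideal.span {f, pderiv 0 f, pderiv 1 f, pderiv 2 f} :
      Ideal (MvPolynomial (Fin 3) k)) =
      Ideal.span {X 2 ^ 2, X 0 ^ 2 + (n : MvPolynomial (Fin 3) k) * X 1 ^ (n-1) * X 2,
        X 1 ^ n} := by
    have h2 : (2 : MvPolynomial (Fin 3) k) = 0 := CharTwo.two_eq_zero
    set G : MvPolynomial (Fin 3) k := X 0 ^ 2 + (n : MvPolynomial (Fin 3) k) * X 1 ^ (n-1) * X 2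
      with hG
    have hd0 : pderiv 0 f = 0 := by
      subst hf
      simp [pderiv_mul, pderiv_pow, pderiv_X_self, pderiv_X_of_ne, nsmul_eq_mul]
      ring_nf; simp [h2]
    have hd1 : pderiv 1 f = G := by
      subst hf
      simp [hG, pderiv_mul, pderiv_pow, pderiv_X_self, pderiv_X_of_ne, nsmul_eq_mul]
      ring_nf
    have hd2 : pderiv 2 f = X 1 ^ n := by
      subst hf
      simp [pderiv_mul, pderiv_pow, pderiv_X_self, pderiv_X_of_ne, nsmul_eq_mul]
      ring_nf; simp [h2]
    have h1 : (X 1 : MvPolynomial (Fin 3) k) ^ (n-1) * X 1 = X 1 ^ n := by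
      rw [← pow_succ, Nat.sub_add_cancel (by omega)]
    have hG1 : G * X 1 = X 0 ^ 2 * X 1 + (n : MvPolynomial (Fin 3) k) * (X 1 ^ n * X 2) := by
      rw [hG]; linear_combination ((n : MvPolynomial (Fin 3) k) * X 2) * h1
    have hfeq : f = X 2 ^ 2 + G * X 1
        + (1 - (n : MvPolynomial (Fin 3) k)) * (X 1 ^ n * X 2) := by
      rw [hf]; linear_combination -hG1
    apply le_antisymm <;> rw [Ideal.span_le] <;> intro p hp <;>
      simp only [Set.mem_insert_iff, Set.mem_singleton_iff] at hp
    · rcases hp with rfl | rfl | rfl | rfl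
      · rw [hfeq]
        exact add_mem (add_mem (Ideal.subset_span (by simp))
          (Ideal.mul_mem_right _ _ (Ideal.subset_span (by simp))))
          (Ideal.mul_mem_left _ _ (Ideal.mul_mem_right _ _ (Ideal.subset_span (by simp))))
      · rw [hd0]; exact zero_mem _
      · rw [hd1]; exact Ideal.subset_span (by simp)
      · rw [hd2]; exact Ideal.subset_span (by simp)
    · rcases hp with rfl | rfl | rfl
      · have hz : (X 2 : MvPolynomial (Fin 3) k) ^ 2 = f + (-(X 1)) * G
            + (((n : MvPolynomial (Fin 3) k) - 1) * X 2) * X 1 ^ n := by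
          linear_combination -hfeq
        rw [hz]
        refine add_mem (add_mem (Ideal.subset_span (by simp))
          (Ideal.mul_mem_left _ _ ?_)) (Ideal.mul_mem_left _ _ ?_)
        · rw [← hd1]; exact Ideal.subset_span (by simp)
        · rw [← hd2]; exact Ideal.subset_span (by simp)
      · rw [← hd1]; exact Ideal.subset_span (by simp)
      · rw [← hd2]; exact Ideal.subset_span (by simp)
  rw [hspan]
  obtain ⟨e⟩ := tjurina_aux (k := k) n _ rfl
  rw [e.toLinearEquiv.finrank_eq]
  exact finrank_TjB2 k n hn
end
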